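/- arXiv:2502.13375 — 2 statements merged into one kernel-verified Lean document; each statement's English description precedes it below -/
import Mathlib

section
/- Let c be an equilibrium under the difference-seeking utility U_# on a finite simple graph G with minimum degree δ, and let u, v be adjacent vertices with c(u) ≠ c(v). Then U_#(c,u) + U_#(c,v) ≥ δ + 1. -/
/-!
After swapping adjacent `u` and `v`, the agent now at `v` has type `c u` and sees every
neighbor of `v` not of type `c u`, `u` itself included; symmetrically at `u`. Every neighbor of
`v` differs in type from `c u` or from `c v`, so `deg v` is at most the post-swap utility at `v`
minus one plus `U_#(c, v)`, and likewise for `u`. In an equilibrium one of the two post-swap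
utilities is at most the pre-swap utility of the other vertex; together with `δ ≤ deg` this
gives the bound.
-/

open SimpleGraph Finset

/-- The coloring obtained from `c` by swapping the colors (agents) at `u` and `v`. -/
def swapColoring {V : Type*} [DecidableEq V] {t : ℕ} (c : V → Fin t) (u v : V) : V → Fin t :=
  fun w => if w = u then c v else if w = v then c u else c w

/-- The binary utility `U_b`: 1 if some neighbor has a different type, 0 otherwise. -/
def Ub {V : Type*} [Fintype V] (G : SimpleGraph V) [DecidableRel G.Adj]
    {t : ℕ} (c : V → Fin t) (v : V) : ℕ :=
  if ∃ w ∈ G.neighborFinset v, c w ≠ c v then 1 else 0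

/-- The difference-seeking utility `U_#`: the number of neighbors of a different type. -/
def Usharp {V : Type*} [Fintype V] (G : SimpleGraph V) [DecidableRel G.Adj]
    {t : ℕ} (c : V → Fin t) (v : V) : ℕ :=
  ((G.neighborFinset v).filter fun w => c w ≠ c v).card

/-- `T_c(v)`: the set of types present in the neighborhood of `v`. -/
def typesIn {V : Type*} [Fintype V] (G : SimpleGraph V) [DecidableRel G.Adj]
    {t : ℕ} (c : V → Fin t) (v : V) : Finset (Fin t) :=
  (G.neighborFinset v).image c

/-- The variety-seeking utility `U_τ`: the number of types other than `c v` in the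
neighborhood of `v`. -/
def Utau {V : Type*} [Fintype V] (G : SimpleGraph V) [DecidableRel G.Adj]
    {t : ℕ} (c : V → Fin t) (v : V) : ℕ :=
  ((typesIn G c v).erase (c v)).card

/-- The swap of `u` and `v` is improving under utility `U`. -/
def ImprovingSwap {V : Type*} [DecidableEq V] {t : ℕ}
    (U : (V → Fin t) → V → ℕ) (c : V → Fin t) (u v : V) : Prop :=
  U c u < U (swapColoring c u v) v ∧ U c v < U (swapColoring c u v) u

/-- `c` is an equilibrium under the utility `U`: no improving swap exists. -/
def Equilibrium {V : Type*} [DecidableEq V] {t : ℕ}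
    (U : (V → Fin t) → V → ℕ) (c : V → Fin t) : Prop :=
  ∀ u v : V, c u ≠ c v → ¬ ImprovingSwap U c u v

/-- The number of monochromatic edges of `c`. -/
def monoCount {V : Type*} [Fintype V] [DecidableEq V] (G : SimpleGraph V) [DecidableRel G.Adj]
    {t : ℕ} (c : V → Fin t) : ℕ :=
  (G.edgeFinset.filter fun e => (e.map c).IsDiag).card

/-- The number of colorful edges of `c`. -/
def ceCount {V : Type*} [Fintype V] [DecidableEq V] (G : SimpleGraph V) [DecidableRel G.Adj]
    {t : ℕ} (c : V → Fin t) : ℕ :=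
  (G.edgeFinset.filter fun e => ¬ (e.map c).IsDiag).card

/-- The cycle graph on `ZMod n`: `i` adjacent to `i + 1` and `i - 1`. -/
def cycleZMod (n : ℕ) : SimpleGraph (ZMod n) := SimpleGraph.circulantGraph {1}

instance (n : ℕ) : DecidableRel (cycleZMod n).Adj := fun a b =>
  decidable_of_iff (a ≠ b ∧ (a - b = 1 ∨ b - a = 1)) (by simp [cycleZMod])

instance {α β : Type*} (G : SimpleGraph α) (H : SimpleGraph β)
    [DecidableRel G.Adj] [DecidableRel H.Adj] [DecidableEq α] [DecidableEq β] :
    DecidableRel (G □ H).Adj := fun x y =>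
  decidable_of_iff (G.Adj x.1 y.1 ∧ x.2 = y.2 ∨ H.Adj x.2 y.2 ∧ x.1 = y.1)
    (SimpleGraph.boxProd_adj).symm

theorem card_le_card_filter_ne_add_card_filter_ne {α β : Type*} [DecidableEq β] (s : Finset α)
    (f : α → β) {a b : β} (hab : a ≠ b) :
    #s ≤ #{x ∈ s | f x ≠ a} + #{x ∈ s | f x ≠ b} := by
  have hsub : {x ∈ s | ¬f x ≠ a} ⊆ {x ∈ s | f x ≠ b} :=
    monotone_filter_right s fun x _ (h : ¬f x ≠ a) => not_not.1 h ▸ hab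
  rw [← card_filter_add_card_filter_not (s := s) (fun x => f x ≠ a)]
  exact Nat.add_le_add_left (card_le_card hsub) _

theorem swapColoring_comm {V : Type*} [DecidableEq V] {t : ℕ} (c : V → Fin t) (u v : V) :
    swapColoring c v u = swapColoring c u v := by
  funext w
  unfold swapColoring
  split_ifs <;> simp_all

section Usharp

variable {V : Type*} [Fintype V] (G : SimpleGraph V) [DecidableRel G.Adj]
  {t : ℕ} (c : V → Fin t)

theorem usharp_swapColoring_right [DecidableEq V] {u v : V} (hadj : G.Adj u v)
    (huv : c u ≠ c v) :
    Usharp G (swapColoring c u v) v = #{w ∈ G.neighborFinset v | c w ≠ c u} + 1 := by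
  have hvu : v ≠ u := hadj.ne'
  have hfilter : {w ∈ G.neighborFinset v | swapColoring c u v w ≠ swapColoring c u v v}
      = insert u {w ∈ G.neighborFinset v | c w ≠ c u} := by
    ext w
    by_cases hwu : w = u
    · subst hwu
      simp [swapColoring, hvu, hadj.symm, huv.symm]
    · have hwv : G.Adj v w → w ≠ v := fun h => h.ne'
      simp +contextual [swapColoring, hvu, hwu, hwv]
  rw [Usharp, hfilter, card_insert_of_notMem (by simp)]

theorem usharp_swapColoring_left [DecidableEq V] {u v : V} (hadj : G.Adj u v)
    (huv : c u ≠ c v) :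
    Usharp G (swapColoring c u v) u = #{w ∈ G.neighborFinset u | c w ≠ c v} + 1 := by
  rw [← swapColoring_comm, usharp_swapColoring_right G c hadj.symm huv.symm]

theorem degree_le_card_filter_ne_add_usharp {a : Fin t} {v : V} (hav : a ≠ c v) :
    G.degree v ≤ #{w ∈ G.neighborFinset v | c w ≠ a} + Usharp G c v := by
  rw [degree, Usharp]
  exact card_le_card_filter_ne_add_card_filter_ne _ c hav

end Usharp

theorem stmt2_general {V : Type*} [Fintype V] [DecidableEq V] (G : SimpleGraph V) [DecidableRel G.Adj]
    {t : ℕ} (c : V → Fin t) (heq : Equilibrium (Usharp G) c)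
    (u v : V) (hadj : G.Adj u v) (huv : c u ≠ c v) :
    G.minDegree + 1 ≤ Usharp G c u + Usharp G c v := by
  have hu := degree_le_card_filter_ne_add_usharp G c huv.symm (v := u)
  have hv := degree_le_card_filter_ne_add_usharp G c huv (v := v)
  have hδu := G.minDegree_le_degree u
  have hδv := G.minDegree_le_degree v
  have hstable := heq u v huv
  rw [ImprovingSwap, usharp_swapColoring_right G c hadj huv,
    usharp_swapColoring_left G c hadj huv, not_and_or, not_lt, not_lt] at hstable
  omega

theorem stmt2 {V : Type*} [Fintype V] [DecidableEq V] (G : SimpleGraph V) [DecidableRel G.Adj]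
    {t : ℕ} (ht : 2 ≤ t) (c : V → Fin t) (heq : Equilibrium (Usharp G) c)
    (u v : V) (hadj : G.Adj u v) (huv : c u ≠ c v) :
    G.minDegree + 1 ≤ Usharp G c u + Usharp G c v :=
  stmt2_general G c heq u v hadj huv
end

section
/- Let c be an equilibrium under the variety-seeking utility U_τ on a finite simple graph G, and let u, v be vertices with c(u) ≠ c(v) such that U_τ(c,u) = U_τ(c,v), c(u) ∈ T_c(u), and c(v) ∈ T_c(v). Then c(u) ∈ T_c(v) or c(v) ∈ T_c(u). -/
open SimpleGraph Finset

section Swap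

variable {V : Type*} [DecidableEq V] {t : ℕ} (c : V → Fin t) {u v w : V}

theorem swapColoring_apply_left : swapColoring c u v u = c v := by
  simp [swapColoring]

theorem swapColoring_apply_right (huv : u ≠ v) : swapColoring c u v v = c u := by
  simp [swapColoring, huv.symm]

theorem swapColoring_apply_of_ne (hu : w ≠ u) (hv : w ≠ v) : swapColoring c u v w = c w := by
  simp [swapColoring, hu, hv]

end Swap

section Types

variable {V : Type*} [Fintype V] (G : SimpleGraph V) [DecidableRel G.Adj]
  {t : ℕ} (c : V → Fin t)

theorem mem_typesIn_of_adj {x y : V} (h : G.Adj x y) : c y ∈ typesIn G c x :=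
  mem_image_of_mem c ((G.mem_neighborFinset x y).2 h)

theorem Utau_lt_card_typesIn {x : V} (h : c x ∈ typesIn G c x) :
    Utau G c x < (typesIn G c x).card :=
  card_erase_lt_of_mem h

variable [DecidableEq V] {u v : V}

theorem typesIn_swapColoring_of_not_adj {x : V} (hu : ¬ G.Adj x u) (hv : ¬ G.Adj x v) :
    typesIn G (swapColoring c u v) x = typesIn G c x := by
  refine image_congr fun w hw => swapColoring_apply_of_ne c ?_ ?_
  · rintro rfl
    exact hu ((G.mem_neighborFinset x w).1 hw)
  · rintro rfl
    exact hv ((G.mem_neighborFinset x w).1 hw)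

theorem Utau_swapColoring_left (hadj : ¬ G.Adj u v) :
    Utau G (swapColoring c u v) u = ((typesIn G c u).erase (c v)).card := by
  rw [Utau, typesIn_swapColoring_of_not_adj G c (G.irrefl (v := u)) hadj, swapColoring_apply_left]

theorem Utau_swapColoring_right (hadj : ¬ G.Adj u v) (huv : u ≠ v) :
    Utau G (swapColoring c u v) v = ((typesIn G c v).erase (c u)).card := by
  rw [Utau, typesIn_swapColoring_of_not_adj G c (fun h => hadj h.symm) (G.irrefl (v := v)),
    swapColoring_apply_right c huv]

end Types

theorem stmt5_general {V : Type*} [Fintype V] [DecidableEq V] (G : SimpleGraph V) [DecidableRel G.Adj]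
    {t : ℕ} (c : V → Fin t) (heq : Equilibrium (Utau G) c)
    (u v : V) (huv : c u ≠ c v) (hutil : Utau G c u = Utau G c v)
    (hu : c u ∈ typesIn G c u) (hv : c v ∈ typesIn G c v) :
    c u ∈ typesIn G c v ∨ c v ∈ typesIn G c u := by
  by_contra! ⟨hnv, hnu⟩
  have hadj : ¬ G.Adj u v := fun h => hnu (mem_typesIn_of_adj G c h)
  have hne : u ≠ v := fun h => huv (congrArg c h)
  -- `u`, `v` are non-adjacent, so each keeps its neighbourhood types, none of which is its new
  -- type: its utility rises from `|T| - 1` to `|T|`.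
  refine heq u v huv ⟨?_, ?_⟩
  · rw [Utau_swapColoring_right G c hadj hne, erase_eq_of_notMem hnv, hutil]
    exact Utau_lt_card_typesIn G c hv
  · rw [Utau_swapColoring_left G c hadj, erase_eq_of_notMem hnu, ← hutil]
    exact Utau_lt_card_typesIn G c hu

theorem stmt5 {V : Type*} [Fintype V] [DecidableEq V] (G : SimpleGraph V) [DecidableRel G.Adj]
    {t : ℕ} (ht : 2 ≤ t) (c : V → Fin t) (heq : Equilibrium (Utau G) c)
    (u v : V) (huv : c u ≠ c v) (hutil : Utau G c u = Utau G c v)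
    (hu : c u ∈ typesIn G c u) (hv : c v ∈ typesIn G c v) :
    c u ∈ typesIn G c v ∨ c v ∈ typesIn G c u :=
  stmt5_general G c heq u v huv hutil hu hv
end
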